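/- For any prior π on X and two channels C₁, C₂ sharing input X, the g-leakage of the shared-input composition satisfies I_g(π, C₁ ∥ C₂) ≤ I_g(π, C₁) + I_g(π, C₂) + H^min_g(π) − H_g(π). -/
import Mathlib


open Finset

namespace QIF9

/-- Prior g-vulnerability. -/
noncomputable def Vg {X W : Type*} [Fintype X] [Fintype W] [Nonempty W]
    (π : X → ℝ) (g : W → X → ℝ) : ℝ :=
  Finset.univ.sup' Finset.univ_nonempty fun w => ∑ x, π x * g w x

/-- Posterior g-vulnerability. -/
noncomputable def VgPost {X Y W : Type*} [Fintype X] [Fintype Y] [Fintype W] [Nonempty W]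
    (π : X → ℝ) (C : X → Y → ℝ) (g : W → X → ℝ) : ℝ :=
  ∑ y, Finset.univ.sup' Finset.univ_nonempty fun w => ∑ x, π x * C x y * g w x

/-- g-leakage `I_g(π,C) = log (V_g(π,C) / V_g(π))` (in bits). -/
noncomputable def Ig {X Y W : Type*} [Fintype X] [Fintype Y] [Fintype W] [Nonempty W]
    (π : X → ℝ) (C : X → Y → ℝ) (g : W → X → ℝ) : ℝ :=
  Real.logb 2 (VgPost π C g / Vg π g)

/-- Parallel composition with shared input. -/
noncomputable def shParC {X Y₁ Y₂ : Type*}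
    (C₁ : X → Y₁ → ℝ) (C₂ : X → Y₂ → ℝ) : X → Y₁ × Y₂ → ℝ :=
  fun x q => C₁ x q.1 * C₂ x q.2

/-- `I_g(π, C₁ ∥ C₂) ≤ I_g(π, C₁) + I_g(π, C₂) + H^min_g(π) − H_g(π)` where
`H^min_g(π) = −log min { π[x]·g(w,x) : π[x]·g(w,x) ≠ 0 }` and `H_g(π) = −log V_g(π)`. -/
theorem shared_g_leakage_upper {X Y₁ Y₂ W : Type*}
    [Fintype X] [Fintype Y₁] [Fintype Y₂] [Fintype W]
    [Nonempty X] [Nonempty W]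
    (π : X → ℝ) (C₁ : X → Y₁ → ℝ) (C₂ : X → Y₂ → ℝ) (g : W → X → ℝ)
    (hπ0 : ∀ x, 0 ≤ π x) (hπ1 : ∑ x, π x = 1)
    (hC₁0 : ∀ x y, 0 ≤ C₁ x y) (hC₁1 : ∀ x, ∑ y, C₁ x y = 1)
    (hC₂0 : ∀ x y, 0 ≤ C₂ x y) (hC₂1 : ∀ x, ∑ y, C₂ x y = 1)
    (hg : ∀ w x, g w x ∈ Set.Icc (0:ℝ) 1)
    (hS : (Finset.univ.filter
        (fun p : W × X => π p.2 * g p.1 p.2 ≠ 0)).Nonempty)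
    (hV : 0 < Vg π g)
    (hVp₁ : 0 < VgPost π C₁ g) (hVp₂ : 0 < VgPost π C₂ g)
    (hVp : 0 < VgPost π (shParC C₁ C₂) g) :
    Ig π (shParC C₁ C₂) g
      ≤ Ig π C₁ g + Ig π C₂ g
        + (- Real.logb 2 ((Finset.univ.filter
            (fun p : W × X => π p.2 * g p.1 p.2 ≠ 0)).inf' hS
              (fun p => π p.2 * g p.1 p.2)))
        - (- Real.logb 2 (Vg π g)) := by
  classical
  set m := ((Finset.univ.filter
      (fun p : W × X => π p.2 * g p.1 p.2 ≠ 0)).inf' hS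
        (fun p => π p.2 * g p.1 p.2)) with hm_def
  have hm : 0 < m := by
    rw [hm_def, Finset.lt_inf'_iff]
    intro p hp
    rw [Finset.mem_filter] at hp
    exact lt_of_le_of_ne (mul_nonneg (hπ0 p.2) (hg p.1 p.2).1) (Ne.symm hp.2)
  -- key inequality : m * VgPost (C₁∥C₂) ≤ VgPost C₁ * VgPost C₂
  have key : m * VgPost π (shParC C₁ C₂) g ≤ VgPost π C₁ g * VgPost π C₂ g := by
    unfold VgPost
    rw [Finset.mul_sum, Finset.sum_mul_sum, ← Finset.sum_product', ← Finset.univ_product_univ]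
    apply Finset.sum_le_sum
    rintro ⟨y₁, y₂⟩ -
    dsimp only
    obtain ⟨w, -, hw⟩ := Finset.exists_mem_eq_sup' (Finset.univ_nonempty (α := W))
      (fun w => ∑ x, π x * shParC C₁ C₂ x (y₁, y₂) * g w x)
    rw [hw]
    have h1 : m * ∑ x, π x * shParC C₁ C₂ x (y₁, y₂) * g w x
        ≤ (∑ x, π x * C₁ x y₁ * g w x) * (∑ x, π x * C₂ x y₂ * g w x) := by
      rw [Finset.mul_sum]
      calc (∑ x, m * (π x * shParC C₁ C₂ x (y₁, y₂) * g w x))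
          ≤ ∑ x, (π x * C₁ x y₁ * g w x) * (π x * C₂ x y₂ * g w x) := by
            apply Finset.sum_le_sum
            intro x _
            by_cases hx : π x * g w x = 0
            · simp only [shParC]
              have h' : π x * (C₁ x y₁ * C₂ x y₂) * g w x
                  = C₁ x y₁ * C₂ x y₂ * (π x * g w x) := by ring
              rw [h', hx, mul_zero, mul_zero]
              have := hπ0 x; have := (hg w x).1; have := hC₁0 x y₁; have := hC₂0 x y₂
              positivity
            · have hmle : m ≤ π x * g w x := by
                rw [hm_def]
                exact Finset.inf'_le _ (Finset.mem_filter.2 ⟨Finset.mem_univ (w, x), hx⟩)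
              have h0 : 0 ≤ π x * g w x := mul_nonneg (hπ0 x) (hg w x).1
              have h0c : 0 ≤ C₁ x y₁ * C₂ x y₂ := mul_nonneg (hC₁0 x y₁) (hC₂0 x y₂)
              simp only [shParC]
              have e1 : m * (π x * (C₁ x y₁ * C₂ x y₂) * g w x)
                  = (C₁ x y₁ * C₂ x y₂) * (m * (π x * g w x)) := by ring
              have e2 : (π x * C₁ x y₁ * g w x) * (π x * C₂ x y₂ * g w x)
                  = (C₁ x y₁ * C₂ x y₂) * ((π x * g w x) * (π x * g w x)) := by ring
              rw [e1, e2]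
              exact mul_le_mul_of_nonneg_left
                (mul_le_mul_of_nonneg_right hmle h0) h0c
        _ ≤ (∑ x, π x * C₁ x y₁ * g w x) * (∑ x, π x * C₂ x y₂ * g w x) := by
            rw [Finset.sum_mul]
            apply Finset.sum_le_sum
            intro x _
            apply mul_le_mul_of_nonneg_left _
              (mul_nonneg (mul_nonneg (hπ0 x) (hC₁0 x y₁)) (hg w x).1)
            exact Finset.single_le_sum
              (fun x' _ => mul_nonneg (mul_nonneg (hπ0 x') (hC₂0 x' y₂)) (hg w x').1)
              (Finset.mem_univ x)
    refine h1.trans (mul_le_mul ?_ ?_ ?_ ?_)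
    · exact Finset.le_sup' (fun w => ∑ x, π x * C₁ x y₁ * g w x) (Finset.mem_univ w)
    · exact Finset.le_sup' (fun w => ∑ x, π x * C₂ x y₂ * g w x) (Finset.mem_univ w)
    · exact Finset.sum_nonneg fun x _ =>
        mul_nonneg (mul_nonneg (hπ0 x) (hC₂0 x y₂)) (hg w x).1
    · refine le_trans ?_ (Finset.le_sup' _ (Finset.mem_univ w))
      exact Finset.sum_nonneg fun x _ =>
        mul_nonneg (mul_nonneg (hπ0 x) (hC₁0 x y₁)) (hg w x).1
  have h1 : VgPost π (shParC C₁ C₂) g / Vg π g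
      ≤ VgPost π C₁ g * VgPost π C₂ g / (Vg π g * m) := by
    rw [div_le_div_iff₀ hV (by positivity)]
    nlinarith [key, hV.le]
  have h2 : Ig π (shParC C₁ C₂) g
      ≤ Real.logb 2 (VgPost π C₁ g * VgPost π C₂ g / (Vg π g * m)) := by
    unfold Ig
    exact Real.logb_le_logb_of_le (by norm_num) (by positivity) h1
  refine h2.trans (le_of_eq ?_)
  unfold Ig
  rw [Real.logb_div (by positivity) (by positivity),
      Real.logb_mul hVp₁.ne' hVp₂.ne',
      Real.logb_mul hV.ne' hm.ne',
      Real.logb_div hVp₁.ne' hV.ne',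
      Real.logb_div hVp₂.ne' hV.ne']
  ring

end QIF9
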